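/- Fix d ≥ 1 and set n = ⌊d/2⌋. Let γ be the alternating sign sequence for d given by γ_i = (−1)^{d−i} for 0 ≤ i ≤ d. Then z_i(γ) = g_i for all 0 ≤ i ≤ n, where g_i = 2^{d−2i}·d!·(d−i)!·(2d−4i+1)! / (i!·((d−2i)!)²·(2d−2i+1)!); that is, the geometric involutor corresponds to the alternating sign sequence. -/

import Mathlib

open MvPolynomial Finset

/-- A sign sequence for `d`: values `±1` with `s_{d−i} = (−1)^d s_i`. -/
def SignSeq (d : ℕ) (s : ℕ → ℂ) : Prop :=
  ∀ i ≤ d, (s i = 1 ∨ s i = -1) ∧ s (d - i) = (-1 : ℂ) ^ d * s i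

/-- `m_ℓ` is `1/2` if `d = 2ℓ` and `1` otherwise. -/
noncomputable def mcoef (d l : ℕ) : ℂ := if d = 2 * l then 1 / 2 else 1

noncomputable def E1 (d i : ℕ) : ℂ :=
  ((d.factorial : ℂ) * ((2 * d - 4 * i + 1).factorial : ℂ)) /
    ((2 : ℂ) ^ (2 * (i : ℤ) - 1) * ((d - 2 * i).factorial : ℂ) ^ 2)

noncomputable def E2 (d : ℕ) (s : ℕ → ℂ) (i : ℕ) : ℂ :=
  ∑ e ∈ range (i + 1), ∑ l ∈ range (d / 2 + 1), ∑ p ∈ range (l + 1),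
    ∑ q ∈ range (d - l + 1),
      if p + q = d - 2 * e then
        s l * mcoef d l * (-1 : ℂ) ^ q *
            (((d - 2 * e).factorial : ℂ) * ((d - i - e).factorial : ℂ)) /
          (((2 * d - 2 * i - 2 * e + 1).factorial : ℂ) * ((i - e).factorial : ℂ) *
            (p.factorial : ℂ) * (q.factorial : ℂ) * ((l - p).factorial : ℂ) *
            ((d - l - q).factorial : ℂ))
      else 0

/-- `z_i(s) = E_{1,i} · E_{2,i}`. -/
noncomputable def zfun (d : ℕ) (s : ℕ → ℂ) (i : ℕ) : ℂ := E1 d i * E2 d s i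

/-- The coefficients `g_i` of the geometric involutor. -/
noncomputable def gcoef (d i : ℕ) : ℂ :=
  ((2 : ℂ) ^ (d - 2 * i) * (d.factorial : ℂ) * ((d - i).factorial : ℂ) *
      ((2 * d - 4 * i + 1).factorial : ℂ)) /
    ((i.factorial : ℂ) * ((d - 2 * i).factorial : ℂ) ^ 2 * ((2 * d - 2 * i + 1).factorial : ℂ))

/-!
For the alternating sequence `γ_ℓ = (-1)^(d-ℓ)`, the inner `(p, q)`-sum of `E₂` at fixed `ℓ` is,
up to the factor `d!`, the coefficient of `x^(d-2e)` in `C(d,ℓ) (x+1)^ℓ (x-1)^(d-ℓ)`. These terms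
are symmetric under `ℓ ↦ d-ℓ`, so the weights `m_ℓ` turn the sum over `ℓ ≤ ⌊d/2⌋` into half of the
full sum over `ℓ ≤ d`, which by the binomial theorem for `(x+1) + (x-1) = 2x` is the coefficient
of `x^(d-2e)` in `(2x)^d / d!`. Hence only `e = 0` survives, `E₂` collapses to a single term,
and `z_i(γ) = g_i` is a matter of cancelling factorials and powers of `2`.
-/

lemma Finset.sum_antidiagonal_eq_sum_range_sum_range {M : Type*} [AddCommMonoid M]
    {m a b : ℕ} (f : ℕ → ℕ → M)
    (hf : ∀ p q, p + q = m → a < p ∨ b < q → f p q = 0) :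
    ∑ x ∈ antidiagonal m, f x.1 x.2
      = ∑ p ∈ range (a + 1), ∑ q ∈ range (b + 1), if p + q = m then f p q else 0 := by
  rw [← sum_product', ← sum_filter]
  refine (sum_subset (fun x hx => by simpa using (mem_filter.1 hx).2) fun x hx hx' => ?_).symm
  rw [HasAntidiagonal.mem_antidiagonal] at hx
  simp only [mem_filter, mem_product, mem_range, hx, and_true, not_and_or, not_lt] at hx'
  exact hf x.1 x.2 hx (by omega)

namespace Polynomial

variable {R : Type*} [CommRing R]

lemma coeff_X_add_one_pow_mul_X_sub_one_pow (a b m : ℕ) :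
    ((X + 1 : R[X]) ^ a * (X - 1) ^ b).coeff m
      = ∑ p ∈ range (a + 1), ∑ q ∈ range (b + 1),
          if p + q = m then (a.choose p : R) * ((-1) ^ (b - q) * b.choose q) else 0 := by
  rw [sub_eq_add_neg, ← C_1, ← C_neg, coeff_mul, C_1]
  simp_rw [coeff_X_add_one_pow, coeff_X_add_C_pow]
  exact sum_antidiagonal_eq_sum_range_sum_range
    (fun p q => (a.choose p : R) * ((-1) ^ (b - q) * b.choose q)) fun p q _ h => by
      rcases h with h | h <;> simp [Nat.choose_eq_zero_of_lt h]

lemma sum_choose_mul_coeff_X_add_one_pow_mul_X_sub_one_pow (d m : ℕ) :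
    ∑ l ∈ range (d + 1), (d.choose l : R) * ((X + 1 : R[X]) ^ l * (X - 1) ^ (d - l)).coeff m
      = if m = d then 2 ^ d else 0 := by
  simp_rw [← coeff_natCast_mul, ← finsetSum_coeff]
  rw [sum_congr rfl fun l _ => mul_comm _ _, ← add_pow, show (X + 1 + (X - 1) : R[X]) = C 2 * X by
    rw [C_ofNat]; ring, mul_pow, ← C_pow, coeff_C_mul_X_pow]

end Polynomial

lemma sum_range_eq_two_mul_sum_mcoef (d : ℕ) {t : ℕ → ℂ} (ht : ∀ l ≤ d, t (d - l) = t l) :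
    ∑ l ∈ range (d + 1), t l = 2 * ∑ l ∈ range (d / 2 + 1), mcoef d l * t l := by
  obtain ⟨k, rfl | rfl⟩ := Nat.even_or_odd' d
  · have upper : ∑ x ∈ range k, t (k + 1 + x) = ∑ x ∈ range k, t x := by
      rw [← sum_range_reflect t k]
      exact sum_congr rfl fun x hx => by
        have := mem_range.1 hx; rw [← ht (k - 1 - x) (by omega)]; congr 1; omega
    have lower : ∀ l ∈ range k, mcoef (2 * k) l * t l = t l := fun l hl => by
      rw [mcoef, if_neg (by have := mem_range.1 hl; omega), one_mul]
    rw [show 2 * k + 1 = k + 1 + k by ring, sum_range_add, upper, Nat.mul_div_cancel_left k two_pos,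
      sum_range_succ, sum_range_succ, sum_congr rfl lower, mcoef, if_pos rfl]
    ring
  · have upper : ∑ x ∈ range (k + 1), t (k + 1 + x) = ∑ x ∈ range (k + 1), t x := by
      rw [← sum_range_reflect t (k + 1)]
      exact sum_congr rfl fun x hx => by
        have := mem_range.1 hx; rw [← ht (k + 1 - 1 - x) (by omega)]; congr 1; omega
    have weights : ∀ l ∈ range (k + 1), mcoef (2 * k + 1) l * t l = t l := fun l _ => by
      rw [mcoef, if_neg (by omega), one_mul]
    rw [show 2 * k + 1 + 1 = k + 1 + (k + 1) by ring, sum_range_add, upper,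
      show (2 * k + 1) / 2 = k by omega, sum_congr rfl weights]
    ring

noncomputable def E2Slice (d m l : ℕ) : ℂ :=
  ∑ p ∈ range (l + 1), ∑ q ∈ range (d - l + 1),
    if p + q = m then
      (-1 : ℂ) ^ (d - l) * (-1) ^ q /
        ((p.factorial : ℂ) * (q.factorial : ℂ) * ((l - p).factorial : ℂ) *
          ((d - l - q).factorial : ℂ))
    else 0

lemma E2Slice_mul_factorial {d l : ℕ} (m : ℕ) (hl : l ≤ d) :
    E2Slice d m l * d.factorial
      = d.choose l
          * (((Polynomial.X + 1) ^ l * (Polynomial.X - 1) ^ (d - l) : Polynomial ℂ)).coeff m := by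
  rw [Polynomial.coeff_X_add_one_pow_mul_X_sub_one_pow, E2Slice, mul_sum, sum_mul]
  refine sum_congr rfl fun p hp => ?_
  rw [mul_sum, sum_mul]
  refine sum_congr rfl fun q hq => ?_
  rw [mem_range, Nat.lt_succ_iff] at hp hq
  split_ifs
  · rw [Nat.cast_choose ℂ hl, Nat.cast_choose ℂ hp, Nat.cast_choose ℂ hq,
      neg_one_pow_congr (R := ℂ) (m := d - l - q) (n := d - l + q)
        (Nat.even_add.mp ⟨d - l, by omega⟩)]
    have := Nat.factorial_ne_zero l
    have := Nat.factorial_ne_zero (d - l)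
    field_simp
    ring
  · simp

lemma sum_E2Slice (d m : ℕ) :
    ∑ l ∈ range (d + 1), E2Slice d m l = if m = d then 2 ^ d / (d.factorial : ℂ) else 0 := by
  have key : (∑ l ∈ range (d + 1), E2Slice d m l) * d.factorial = if m = d then 2 ^ d else 0 := by
    rw [sum_mul,
      sum_congr rfl fun l hl => E2Slice_mul_factorial m (Nat.lt_succ_iff.1 (mem_range.1 hl)),
      Polynomial.sum_choose_mul_coeff_X_add_one_pow_mul_X_sub_one_pow]
  rw [← zero_div (d.factorial : ℂ), ← ite_div,
    eq_div_iff (Nat.cast_ne_zero.2 d.factorial_ne_zero), key]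

lemma E2Slice_sub {d m l : ℕ} (hl : l ≤ d) (hm : Even (d + m)) :
    E2Slice d m (d - l) = E2Slice d m l := by
  rw [E2Slice, E2Slice, Nat.sub_sub_self hl, sum_comm]
  refine sum_congr rfl fun p _ => sum_congr rfl fun q _ => ?_
  rw [add_comm q p]
  split_ifs
  · obtain ⟨k, hk⟩ := hm
    rw [← pow_add, ← pow_add,
      neg_one_pow_congr (m := l + p) (n := d - l + q) (Nat.even_add.mp ⟨k, by omega⟩)]
    ring
  · rfl

lemma sum_mcoef_mul_E2Slice {d e : ℕ} (he : 2 * e ≤ d) :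
    ∑ l ∈ range (d / 2 + 1), mcoef d l * E2Slice d (d - 2 * e) l
      = if e = 0 then 2 ^ d / (2 * d.factorial : ℂ) else 0 := by
  have h := sum_range_eq_two_mul_sum_mcoef d fun l hl =>
    E2Slice_sub (m := d - 2 * e) hl ⟨d - e, by omega⟩
  rw [sum_E2Slice, eq_comm, mul_comm, ← eq_div_iff two_ne_zero] at h
  rw [h]
  split_ifs <;> first | omega | ring

lemma E2_alternating_eq_sum (d i : ℕ) :
    E2 d (fun k => (-1 : ℂ) ^ (d - k)) i
      = ∑ e ∈ range (i + 1),
          ((d - 2 * e).factorial * (d - i - e).factorial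
              / ((2 * d - 2 * i - 2 * e + 1).factorial * (i - e).factorial) : ℂ)
            * ∑ l ∈ range (d / 2 + 1), mcoef d l * E2Slice d (d - 2 * e) l := by
  simp only [E2, E2Slice, mul_sum]
  refine sum_congr rfl fun e _ => sum_congr rfl fun l _ => sum_congr rfl fun p _ =>
    sum_congr rfl fun q _ => ?_
  split_ifs <;> ring

lemma E2_alternating {d i : ℕ} (hi : 2 * i ≤ d) :
    E2 d (fun k => (-1 : ℂ) ^ (d - k)) i
      = 2 ^ d * (d - i).factorial / (2 * (2 * d - 2 * i + 1).factorial * i.factorial) := by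
  rw [E2_alternating_eq_sum, sum_congr rfl fun e he => by
    rw [sum_mcoef_mul_E2Slice (by have := mem_range.1 he; omega)]]
  simp only [mul_ite, mul_zero, sum_ite_eq', mem_range, Nat.zero_lt_succ, if_true, Nat.sub_zero]
  have := Nat.factorial_ne_zero d
  field_simp

theorem stmt5_general (d : ℕ) :
    ∀ i ≤ d / 2, zfun d (fun k => (-1 : ℂ) ^ (d - k)) i = gcoef d i := by
  intro i hi
  have h2i : 2 * i ≤ d := by omega
  have hpow : (2 : ℂ) ^ (2 * (i : ℤ) - 1) = 2 ^ (2 * i) / 2 := by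
    rw [zpow_sub₀ two_ne_zero, zpow_one, ← zpow_natCast]
    push_cast
    rfl
  rw [zfun, E2_alternating h2i, E1, gcoef, hpow, ← pow_sub_mul_pow 2 h2i]
  have := Nat.factorial_ne_zero (d - 2 * i)
  field_simp

/-- the geometric involutor corresponds to the alternating sign sequence
`γ_i = (−1)^{d−i}`: one has `z_i(γ) = g_i` for all `0 ≤ i ≤ ⌊d/2⌋`. -/
theorem stmt5 (d : ℕ) (hd : 1 ≤ d) :
    ∀ i ≤ d / 2, zfun d (fun k => (-1 : ℂ) ^ (d - k)) i = gcoef d i :=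
  stmt5_general d
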